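/- For all integers q ≥ 2 and n ≥ 1, the family 𝓔_q is n-cell implementable under scenario (∗•) if and only if q ≤ C(n, ⌊n/3⌋) · 2^⌈2n/3⌉. -/

import Mathlib

/-- The alphabet 𝔹• = {0, 1, ∗, •}. -/
inductive BB : Type
  | zero
  | one
  | star
  | reject
deriving DecidableEq

instance : Fintype BB where
  elems := {BB.zero, BB.one, BB.star, BB.reject}
  complete := by intro x; cases x <;> simp

/-- The cell function T : 𝔹• × 𝔹• → 𝔹: T(u,ϑ) = 1 iff u = ∗, or ϑ = ∗,
or u,ϑ ∈ 𝔹 with u = ϑ. -/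
def Tcell : BB → BB → Bool
  | BB.star, _ => true
  | _, BB.star => true
  | BB.zero, BB.zero => true
  | BB.one, BB.one => true
  | _, _ => false

/-- The word-level function T(u,ϑ) = ⋀_{j<n} T(u_j, ϑ_j). -/
def Tword {n : ℕ} (u θ : Fin n → BB) : Bool :=
  decide (∀ j, Tcell (u j) (θ j) = true)

/-- The alphabet 𝔹 = {0,1} ⊆ 𝔹•. -/
def Bcirc : Set BB := {BB.zero, BB.one}

/-- The alphabet 𝔹∗ = {0,1,∗} ⊆ 𝔹•. -/
def Bstar : Set BB := {BB.zero, BB.one, BB.star}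

/-- The full alphabet 𝔹•. -/
def Bdot : Set BB := Set.univ

/-- A family Φ of functions {0,…,q−1} → 𝔹 is n-cell implementable under
scenario (A,B) if there are mappings u : {0,…,q−1} → A^n and ϑ : Φ → B^n
with f(x) = T(u(x), ϑ(f)) for all f ∈ Φ and x. -/
def Implementable (A B : Set BB) (n q : ℕ) (Φ : Set (Fin q → Bool)) : Prop :=
  ∃ u : Fin q → Fin n → BB, ∃ θ : (Fin q → Bool) → Fin n → BB,
    (∀ x j, u x j ∈ A) ∧ (∀ f ∈ Φ, ∀ j, θ f j ∈ B) ∧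
    (∀ f ∈ Φ, ∀ x, f x = Tword (u x) (θ f))

/-- The family 𝓔_q = { x ↦ [x = t] : t ∈ [q⟩ }. -/
def Eset (q : ℕ) : Set (Fin q → Bool) :=
  { f | ∃ t : Fin q, f = fun x => decide (x = t) }

/-- The family 𝓝_q = { x ↦ [x ≠ t] : t ∈ [q⟩ }. -/
def Nset (q : ℕ) : Set (Fin q → Bool) :=
  { f | ∃ t : Fin q, f = fun x => decide (x ≠ t) }

/-- The family 𝓖_q = { x ↦ [x ≥ t] : t ∈ [q⟩ }. -/
def Gset (q : ℕ) : Set (Fin q → Bool) :=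
  { f | ∃ t : Fin q, f = fun x => decide (t ≤ x) }

/-- The family 𝓛_q = { x ↦ [x ≤ t] : t ∈ [q⟩ }. -/
def Lset (q : ℕ) : Set (Fin q → Bool) :=
  { f | ∃ t : Fin q, f = fun x => decide (x ≤ t) }

open Finset Nat

def bitB (c : Bool) : BB := if c then BB.one else BB.zero
def bitOf : BB → Bool
  | BB.one => true
  | _ => false

lemma Tword_eq_true_iff {n : ℕ} (u θ : Fin n → BB) :
    Tword u θ = true ↔ ∀ j, Tcell (u j) (θ j) = true := by simp [Tword]

lemma Tcell_star_left (y : BB) : Tcell BB.star y = true := by cases y <;> rfl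
lemma Tcell_bitB_self (c : Bool) : Tcell (bitB c) (bitB c) = true := by cases c <;> rfl
lemma Tcell_bitB_eq {c d : Bool} (h : Tcell (bitB c) (bitB d) = true) : c = d := by
  cases c <;> cases d <;> simp_all [bitB, Tcell]
lemma Tcell_bitB_reject (c : Bool) : Tcell (bitB c) BB.reject = false := by cases c <;> rfl
lemma bitB_ne_star (c : Bool) : bitB c ≠ BB.star := by cases c <;> simp [bitB]
lemma bitB_bitOf {v : BB} (h1 : v ≠ BB.reject) (h2 : v ≠ BB.star) : bitB (bitOf v) = v := by
  cases v <;> simp_all [bitB, bitOf]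

lemma levelval_step_up (n k : ℕ) (h : 3 * k + 2 ≤ n) :
    n.choose k * 2 ^ (n - k) ≤ n.choose (k + 1) * 2 ^ (n - (k + 1)) := by
  have key := Nat.choose_succ_right_eq n k
  have h2 : n.choose k * 2 ≤ n.choose (k + 1) := by
    apply Nat.le_of_mul_le_mul_right _ (k.succ_pos)
    calc n.choose k * 2 * (k + 1) = n.choose k * (2 * (k + 1)) := by ring
      _ ≤ n.choose k * (n - k) := Nat.mul_le_mul le_rfl (by omega)
      _ = n.choose (k + 1) * (k + 1) := key.symm
  have e : n - k = (n - (k + 1)) + 1 := by omega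
  rw [e, pow_succ]
  calc n.choose k * (2 ^ (n - (k + 1)) * 2) = n.choose k * 2 * 2 ^ (n - (k + 1)) := by ring
    _ ≤ n.choose (k + 1) * 2 ^ (n - (k + 1)) := Nat.mul_le_mul h2 le_rfl

lemma levelval_step_down (n k : ℕ) (h : n ≤ 3 * k + 2) :
    n.choose (k + 1) * 2 ^ (n - (k + 1)) ≤ n.choose k * 2 ^ (n - k) := by
  by_cases hkn : k + 1 ≤ n
  · have key := Nat.choose_succ_right_eq n k
    have h2 : n.choose (k + 1) ≤ n.choose k * 2 := by
      apply Nat.le_of_mul_le_mul_right _ (k.succ_pos)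
      calc n.choose (k + 1) * (k + 1) = n.choose k * (n - k) := key
        _ ≤ n.choose k * (2 * (k + 1)) := Nat.mul_le_mul le_rfl (by omega)
        _ = n.choose k * 2 * (k + 1) := by ring
    have e : n - k = (n - (k + 1)) + 1 := by omega
    rw [e, pow_succ]
    calc n.choose (k + 1) * 2 ^ (n - (k + 1)) ≤ n.choose k * 2 * 2 ^ (n - (k + 1)) :=
          Nat.mul_le_mul h2 le_rfl
      _ = n.choose k * (2 ^ (n - (k + 1)) * 2) := by ring
  · rw [Nat.choose_eq_zero_of_lt (by omega)]
    simp

lemma level_le_max (n k : ℕ) :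
    n.choose k * 2 ^ (n - k) ≤ n.choose (n / 3) * 2 ^ (n - n / 3) := by
  have up : ∀ j : ℕ, n.choose (n / 3 - j) * 2 ^ (n - (n / 3 - j)) ≤
      n.choose (n / 3) * 2 ^ (n - n / 3) := by
    intro j
    induction j with
    | zero => simp
    | succ j ih =>
      by_cases hj : j < n / 3
      · have e : n / 3 - j = (n / 3 - (j + 1)) + 1 := by omega
        refine le_trans ?_ ih
        rw [e]
        exact levelval_step_up n _ (by omega)
      · have e : n / 3 - (j + 1) = n / 3 - j := by omega
        rw [e]; exact ih
  have down : ∀ j : ℕ, n.choose (n / 3 + j) * 2 ^ (n - (n / 3 + j)) ≤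
      n.choose (n / 3) * 2 ^ (n - n / 3) := by
    intro j
    induction j with
    | zero => simp
    | succ j ih =>
      have e : n / 3 + (j + 1) = (n / 3 + j) + 1 := by omega
      rw [e]
      exact le_trans (levelval_step_down n (n / 3 + j) (by omega)) ih
  rcases le_total k (n / 3) with h | h
  · have := up (n / 3 - k); rwa [Nat.sub_sub_self h] at this
  · have := down (k - n / 3); rwa [Nat.add_sub_cancel' h] at this

def starSet {n q : ℕ} (u : Fin q → Fin n → BB) (x : Fin q) : Finset (Fin n) :=
  Finset.univ.filter (fun j => u x j = BB.star)

def kst {n q : ℕ} (u : Fin q → Fin n → BB) (x : Fin q) : ℕ := (starSet u x).card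

def predP {n q : ℕ} (u : Fin q → Fin n → BB) (x : Fin q)
    (p : Equiv.Perm (Fin n) × (Fin n → Bool)) : Prop :=
  (∀ i : Fin n, (u x (p.1 i) = BB.star ↔ (i : ℕ) < kst u x)) ∧
  (∀ j, u x j ≠ BB.star → u x j = bitB (p.2 j))

instance {n q : ℕ} (u : Fin q → Fin n → BB) (x : Fin q) : DecidablePred (predP u x) :=
  fun p => by unfold predP; infer_instance

lemma predP_disj_aux {n q : ℕ} (u : Fin q → Fin n → BB)
    (hdom : ∀ x t : Fin q, (∀ j, u x j = BB.star ∨ u x j = u t j) → x = t)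
    (x t : Fin q) (p : Equiv.Perm (Fin n) × (Fin n → Bool))
    (hx : predP u x p) (ht : predP u t p) (hk : kst u x ≤ kst u t) : t = x := by
  apply hdom t x
  intro j
  by_cases hs : u t j = BB.star
  · exact Or.inl hs
  · right
    have hji : p.1 (p.1.symm j) = j := p.1.apply_symm_apply j
    have h1 : ¬ ((p.1.symm j : Fin n) : ℕ) < kst u t := by
      intro hlt
      exact hs (by rw [← hji] at hs ⊢; exact (ht.1 _).mpr hlt)
    have h2 : ¬ ((p.1.symm j : Fin n) : ℕ) < kst u x := fun hlt => h1 (lt_of_lt_of_le hlt hk)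
    have hx' : u x j ≠ BB.star := by
      rw [← hji]
      exact fun hh => h2 ((hx.1 _).mp hh)
    rw [ht.2 j hs, hx.2 j hx']

lemma predP_disj {n q : ℕ} (u : Fin q → Fin n → BB)
    (hdom : ∀ x t : Fin q, (∀ j, u x j = BB.star ∨ u x j = u t j) → x = t)
    (x t : Fin q) (p : Equiv.Perm (Fin n) × (Fin n → Bool))
    (hx : predP u x p) (ht : predP u t p) : x = t := by
  rcases le_total (kst u x) (kst u t) with h | h
  · exact (predP_disj_aux u hdom x t p hx ht h).symm
  · exact predP_disj_aux u hdom t x p ht hx h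

lemma card_predP_lower {n q : ℕ} (u : Fin q → Fin n → BB)
    (hu : ∀ x j, u x j ≠ BB.reject) (x : Fin q) :
    (kst u x)! * (n - kst u x)! * 2 ^ (kst u x) ≤ Fintype.card {p // predP u x p} := by
  set k := kst u x with hkdef
  have hkn : k ≤ n := by
    have := Finset.card_filter_le (Finset.univ : Finset (Fin n)) (fun j => u x j = BB.star)
    simpa [hkdef, kst, starSet] using this
  have cB : Fintype.card {j : Fin n // u x j = BB.star} = k := by
    rw [Fintype.card_subtype]; rfl
  have eA : {i : Fin n // (i : ℕ) < k} ≃ Fin k :=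
    { toFun := fun a => ⟨(a.1 : ℕ), a.2⟩
      invFun := fun b => ⟨⟨b.1, lt_of_lt_of_le b.2 hkn⟩, b.2⟩
      left_inv := by intro a; apply Subtype.ext; apply Fin.ext; rfl
      right_inv := by intro b; rfl }
  have cA : Fintype.card {i : Fin n // (i : ℕ) < k} = k := by
    rw [Fintype.card_congr eA, Fintype.card_fin]
  have cA' : Fintype.card {i : Fin n // ¬ (i : ℕ) < k} = n - k := by
    rw [Fintype.card_subtype_compl, cA, Fintype.card_fin]
  have cB' : Fintype.card {j : Fin n // ¬ u x j = BB.star} = n - k := by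
    rw [Fintype.card_subtype_compl, cB, Fintype.card_fin]
  set A := {i : Fin n // (i : ℕ) < k}
  set B := {j : Fin n // u x j = BB.star}
  set A' := {i : Fin n // ¬ (i : ℕ) < k}
  set B' := {j : Fin n // ¬ u x j = BB.star}
  have eAB : Nonempty (A ≃ B) := ⟨Fintype.equivOfCardEq (cA.trans cB.symm)⟩
  have eA'B' : Nonempty (A' ≃ B') := ⟨Fintype.equivOfCardEq (cA'.trans cB'.symm)⟩
  have cardD : Fintype.card ((A ≃ B) × (A' ≃ B') × (B → Bool)) = k ! * ((n - k)! * 2 ^ k) := by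
    rw [Fintype.card_prod, Fintype.card_prod, Fintype.card_equiv eAB.some,
      Fintype.card_equiv eA'B'.some, Fintype.card_fun, cA, cA', cB, Fintype.card_bool]
  -- the permutation built from a pair of equivs
  let permOf : (A ≃ B) → (A' ≃ B') → Equiv.Perm (Fin n) := fun σ τ =>
    (Equiv.sumCompl (fun i : Fin n => (i : ℕ) < k)).symm.trans
      ((σ.sumCongr τ).trans (Equiv.sumCompl (fun j : Fin n => u x j = BB.star)))
  have hpos : ∀ (σ : A ≃ B) (τ : A' ≃ B') (i : Fin n) (h : (i : ℕ) < k),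
      permOf σ τ i = (σ ⟨i, h⟩).1 := by
    intro σ τ i h
    simp only [permOf, Equiv.trans_apply, Equiv.sumCongr_apply]
    rw [Equiv.sumCompl_symm_apply_of_pos (p := fun i : Fin n => (i : ℕ) < k) h, Sum.map_inl, Equiv.sumCompl_apply_inl]
  have hneg : ∀ (σ : A ≃ B) (τ : A' ≃ B') (i : Fin n) (h : ¬ (i : ℕ) < k),
      permOf σ τ i = (τ ⟨i, h⟩).1 := by
    intro σ τ i h
    simp only [permOf, Equiv.trans_apply, Equiv.sumCongr_apply]
    rw [Equiv.sumCompl_symm_apply_of_neg (p := fun i : Fin n => (i : ℕ) < k) h, Sum.map_inr, Equiv.sumCompl_apply_inr]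
  let G : (A ≃ B) × (A' ≃ B') × (B → Bool) → {p // predP u x p} := fun d =>
    ⟨(permOf d.1 d.2.1, fun j => if h : u x j = BB.star then d.2.2 ⟨j, h⟩ else bitOf (u x j)),
     by
      constructor
      · intro i
        by_cases h : (i : ℕ) < k
        · rw [hpos d.1 d.2.1 i h]
          exact ⟨fun _ => h, fun _ => (d.1 ⟨i, h⟩).2⟩
        · rw [hneg d.1 d.2.1 i h]
          exact ⟨fun hh => absurd hh (d.2.1 ⟨i, h⟩).2, fun hh => absurd hh h⟩
      · intro j hj
        dsimp only
        rw [dif_neg hj]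
        exact (bitB_bitOf (hu x j) hj).symm⟩
  have Ginj : Function.Injective G := by
    intro d1 d2 hG
    have hpair := Subtype.ext_iff.mp hG
    have hπ : permOf d1.1 d1.2.1 = permOf d2.1 d2.2.1 := congrArg Prod.fst hpair
    have hb := congrArg Prod.snd hpair
    have hσ : d1.1 = d2.1 := by
      apply Equiv.ext
      intro a
      apply Subtype.ext
      have h1 := hpos d1.1 d1.2.1 a.1 a.2
      have h2 := hpos d2.1 d2.2.1 a.1 a.2
      have h3 : permOf d1.1 d1.2.1 a.1 = permOf d2.1 d2.2.1 a.1 := by rw [hπ]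
      rw [h1, h2] at h3
      simpa using h3
    have hτ : d1.2.1 = d2.2.1 := by
      apply Equiv.ext
      intro a
      apply Subtype.ext
      have h1 := hneg d1.1 d1.2.1 a.1 a.2
      have h2 := hneg d2.1 d2.2.1 a.1 a.2
      have h3 : permOf d1.1 d1.2.1 a.1 = permOf d2.1 d2.2.1 a.1 := by rw [hπ]
      rw [h1, h2] at h3
      simpa using h3
    have hc : d1.2.2 = d2.2.2 := by
      funext s
      have := congrFun hb s.1
      simpa [G, dif_pos s.2] using this
    rcases d1 with ⟨σ1, τ1, c1⟩
    rcases d2 with ⟨σ2, τ2, c2⟩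
    simp_all
  calc k ! * (n - k)! * 2 ^ k = k ! * ((n - k)! * 2 ^ k) := by ring
    _ = Fintype.card ((A ≃ B) × (A' ≃ B') × (B → Bool)) := cardD.symm
    _ ≤ Fintype.card {p // predP u x p} := Fintype.card_le_of_injective G Ginj

lemma antichain_bound {n q : ℕ} (u : Fin q → Fin n → BB)
    (hu : ∀ x j, u x j ≠ BB.reject)
    (hdom : ∀ x t : Fin q, (∀ j, u x j = BB.star ∨ u x j = u t j) → x = t) :
    q ≤ n.choose (n / 3) * 2 ^ (n - n / 3) := by
  set M := n.choose (n / 3) * 2 ^ (n - n / 3) with hM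
  -- the sigma type of all (x, pair) with pair ∈ P x injects into Perm × functions
  have hinj2 : Function.Injective
      (fun s : (Σ x : Fin q, {p // predP u x p}) => s.2.1) := by
    rintro ⟨xa, pa, hpa⟩ ⟨xb, pb, hpb⟩ h
    dsimp at h
    subst h
    have : xa = xb := predP_disj u hdom xa xb pa hpa hpb
    subst this
    rfl
  have hsum : ∑ x : Fin q, Fintype.card {p // predP u x p} ≤ n ! * 2 ^ n := by
    calc ∑ x : Fin q, Fintype.card {p // predP u x p}
        = Fintype.card (Σ x : Fin q, {p // predP u x p}) := Fintype.card_sigma.symm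
      _ ≤ Fintype.card (Equiv.Perm (Fin n) × (Fin n → Bool)) :=
          Fintype.card_le_of_injective _ hinj2
      _ = n ! * 2 ^ n := by
          simp [Fintype.card_perm, Fintype.card_fun]
  have key : ∀ x : Fin q, n ! * 2 ^ n ≤ Fintype.card {p // predP u x p} * M := by
    intro x
    have hkn : kst u x ≤ n := by
      have := Finset.card_filter_le (Finset.univ : Finset (Fin n)) (fun j => u x j = BB.star)
      simpa [kst, starSet] using this
    calc n ! * 2 ^ n
        = (n.choose (kst u x) * (kst u x)! * (n - kst u x)!) * 2 ^ (kst u x + (n - kst u x)) := by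
          rw [Nat.add_sub_cancel' hkn, Nat.choose_mul_factorial_mul_factorial hkn]
      _ = ((kst u x)! * (n - kst u x)! * 2 ^ (kst u x)) *
            (n.choose (kst u x) * 2 ^ (n - kst u x)) := by
          rw [pow_add]; ring
      _ ≤ Fintype.card {p // predP u x p} * M :=
          Nat.mul_le_mul (card_predP_lower u hu x) (level_le_max n (kst u x))
  have final : q * (n ! * 2 ^ n) ≤ (n ! * 2 ^ n) * M := by
    calc q * (n ! * 2 ^ n) = ∑ _x : Fin q, n ! * 2 ^ n := by
          rw [Finset.sum_const, Finset.card_univ, Fintype.card_fin, smul_eq_mul]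
      _ ≤ ∑ x : Fin q, Fintype.card {p // predP u x p} * M := Finset.sum_le_sum fun x _ => key x
      _ = (∑ x : Fin q, Fintype.card {p // predP u x p}) * M := by rw [Finset.sum_mul]
      _ ≤ (n ! * 2 ^ n) * M := Nat.mul_le_mul hsum le_rfl
  have hpos : 0 < n ! * 2 ^ n := Nat.mul_pos n.factorial_pos (Nat.pow_pos (by norm_num))
  have : q * (n ! * 2 ^ n) ≤ M * (n ! * 2 ^ n) := by
    calc q * (n ! * 2 ^ n) ≤ (n ! * 2 ^ n) * M := final
      _ = M * (n ! * 2 ^ n) := by ring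
  exact Nat.le_of_mul_le_mul_right this hpos

/-- Index type for the construction: a `k`-subset together with a bit vector
vanishing on it. -/
def IdxT (n k : ℕ) : Type :=
  {p : Finset (Fin n) × (Fin n → Bool) // p.1.card = k ∧ ∀ j ∈ p.1, p.2 j = false}

instance (n k : ℕ) : Fintype (IdxT n k) := by unfold IdxT; infer_instance

def idxEquiv (n k : ℕ) : IdxT n k ≃
    Σ S : {S : Finset (Fin n) // S.card = k}, {b : Fin n → Bool // ∀ j ∈ S.1, b j = false} where
  toFun p := ⟨⟨p.1.1, p.2.1⟩, ⟨p.1.2, p.2.2⟩⟩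
  invFun s := ⟨(s.1.1, s.2.1), ⟨s.1.2, s.2.2⟩⟩
  left_inv p := rfl
  right_inv s := rfl

def vanishEquiv (n : ℕ) (S : Finset (Fin n)) :
    {b : Fin n → Bool // ∀ j ∈ S, b j = false} ≃ ({j : Fin n // j ∉ S} → Bool) where
  toFun b j := b.1 j.1
  invFun c := ⟨fun j => if h : j ∈ S then false else c ⟨j, h⟩, fun j hj => by simp [hj]⟩
  left_inv b := by
    apply Subtype.ext
    funext j
    by_cases h : j ∈ S
    · simp [h, (b.2 j h).symm]
    · simp [h]
  right_inv c := by
    funext j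
    simp [j.2]

lemma card_vanish (n : ℕ) (S : Finset (Fin n)) :
    Fintype.card {b : Fin n → Bool // ∀ j ∈ S, b j = false} = 2 ^ (n - S.card) := by
  rw [Fintype.card_congr (vanishEquiv n S), Fintype.card_fun, Fintype.card_bool]
  congr 1
  rw [Fintype.card_subtype_compl, Fintype.card_fin]
  congr 1
  exact Fintype.card_coe S

lemma card_subtype_cardeq (n k : ℕ) :
    Fintype.card {S : Finset (Fin n) // S.card = k} = n.choose k := by
  rw [Fintype.card_subtype]
  have : Finset.univ.filter (fun S : Finset (Fin n) => S.card = k)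
      = Finset.powersetCard k Finset.univ := by
    ext S
    simp [Finset.mem_powersetCard_univ]
  rw [this, Finset.card_powersetCard, Finset.card_fin]

lemma card_IdxT (n k : ℕ) : Fintype.card (IdxT n k) = n.choose k * 2 ^ (n - k) := by
  rw [Fintype.card_congr (idxEquiv n k), Fintype.card_sigma]
  have : ∀ S : {S : Finset (Fin n) // S.card = k},
      Fintype.card {b : Fin n → Bool // ∀ j ∈ S.1, b j = false} = 2 ^ (n - k) := by
    intro S
    rw [card_vanish, S.2]
  rw [Finset.sum_congr rfl (fun S _ => this S), Finset.sum_const, Finset.card_univ,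
    card_subtype_cardeq, smul_eq_mul]

lemma Efun_inj (q : ℕ) : Function.Injective (fun t : Fin q => fun x : Fin q => decide (x = t)) := by
  intro t t' h
  have := congrFun h t
  simpa using this.symm

lemma impl_of_le (n q : ℕ) (hq : 0 < q) (h : q ≤ n.choose (n / 3) * 2 ^ (n - n / 3)) :
    Implementable Bstar Bdot n q (Eset q) := by
  classical
  obtain ⟨e⟩ : Nonempty (Fin q ↪ IdxT n (n / 3)) := by
    apply Function.Embedding.nonempty_of_card_le
    rw [Fintype.card_fin, card_IdxT]
    exact h
  set k0 := n / 3
  let u : Fin q → Fin n → BB := fun x j =>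
    if j ∈ (e x).1.1 then BB.star else bitB ((e x).1.2 j)
  let tOf : (Fin q → Bool) → Fin q := fun f =>
    if hf : ∃ t : Fin q, f = fun x => decide (x = t) then hf.choose else ⟨0, hq⟩
  let θ : (Fin q → Bool) → Fin n → BB := fun f j =>
    if j ∈ (e (tOf f)).1.1 then BB.reject else bitB ((e (tOf f)).1.2 j)
  refine ⟨u, θ, ?_, ?_, ?_⟩
  · intro x j
    by_cases hj : j ∈ (e x).1.1
    · simp only [u, if_pos hj]; simp [Bstar]
    · simp only [u, if_neg hj]
      cases hc : (e x).1.2 j <;> simp [bitB, Bstar]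
  · intro f _ j; simp [Bdot]
  · rintro f ⟨t, rfl⟩ x
    have htOf : tOf (fun x : Fin q => decide (x = t)) = t := by
      have hf : ∃ t' : Fin q, (fun x : Fin q => decide (x = t)) = fun x => decide (x = t') :=
        ⟨t, rfl⟩
      simp only [tOf, dif_pos hf]
      exact Efun_inj q hf.choose_spec.symm
    have hθ : θ (fun x : Fin q => decide (x = t)) =
        fun j => if j ∈ (e t).1.1 then BB.reject else bitB ((e t).1.2 j) := by
      simp only [θ, htOf]
    rw [hθ]
    by_cases hxt : x = t
    · subst hxt
      have : Tword (u x) (fun j => if j ∈ (e x).1.1 then BB.reject else bitB ((e x).1.2 j))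
          = true := by
        rw [Tword_eq_true_iff]
        intro j
        by_cases hj : j ∈ (e x).1.1
        · simp only [u, if_pos hj]
          exact Tcell_star_left _
        · simp only [u, if_neg hj]
          exact Tcell_bitB_self _
      rw [this]
      simp
    · have hne : Tword (u x) (fun j => if j ∈ (e t).1.1 then BB.reject else bitB ((e t).1.2 j))
          ≠ true := by
        intro hT
        rw [Tword_eq_true_iff] at hT
        -- star set of t is contained in that of x
        have hS : (e t).1.1 ⊆ (e x).1.1 := by
          intro j hj
          have := hT j
          simp only [if_pos hj] at this
          by_contra hjx
          simp only [u, if_neg hjx] at this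
          rw [Tcell_bitB_reject] at this
          exact Bool.false_ne_true this
        have hSeq : (e t).1.1 = (e x).1.1 :=
          Finset.eq_of_subset_of_card_le hS (by rw [(e x).2.1, (e t).2.1])
        have hbeq : (e x).1.2 = (e t).1.2 := by
          funext j
          by_cases hj : j ∈ (e t).1.1
          · rw [(e x).2.2 j (hSeq ▸ hj), (e t).2.2 j hj]
          · have := hT j
            simp only [if_neg hj] at this
            have hjx : j ∉ (e x).1.1 := fun hc => hj (hSeq ▸ hc)
            simp only [u, if_neg hjx] at this
            exact Tcell_bitB_eq this
        have : e x = e t := Subtype.ext (Prod.ext (hSeq.symm) hbeq)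
        exact hxt (e.injective this)
      have hfalse : Tword (u x)
          (fun j => if j ∈ (e t).1.1 then BB.reject else bitB ((e t).1.2 j)) = false :=
        Bool.not_eq_true _ |>.mp hne
      rw [hfalse]
      simp [hxt]

theorem Eset_implementable_starReject (q n : ℕ) (hq : 2 ≤ q) (hn : 1 ≤ n) :
    Implementable Bstar Bdot n q (Eset q) ↔
      q ≤ n.choose (n / 3) * 2 ^ ((2 * n + 2) / 3) := by
  have e3 : (2 * n + 2) / 3 = n - n / 3 := by omega
  rw [e3]
  constructor
  · rintro ⟨u, θ, hu, -, hT⟩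
    apply antichain_bound u
    · intro x j hr
      have := hu x j
      rw [hr] at this
      simp [Bstar] at this
    · intro x t hdomxt
      have hf : (fun y : Fin q => decide (y = t)) ∈ Eset q := ⟨t, rfl⟩
      have h1 : Tword (u t) (θ fun y : Fin q => decide (y = t)) = true := by
        have := hT _ hf t
        simpa using this.symm
      have h2 : Tword (u x) (θ fun y : Fin q => decide (y = t)) = true := by
        rw [Tword_eq_true_iff]
        intro j
        rcases hdomxt j with hcase | hcase
        · rw [hcase]; exact Tcell_star_left _
        · rw [hcase]; exact (Tword_eq_true_iff _ _).mp h1 j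
      have h3 := hT _ hf x
      rw [h2] at h3
      exact of_decide_eq_true h3
  · intro h
    exact impl_of_le n q (by omega) h
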